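/- Let n ≥ 2 and let ψ be a rational map with φ(z) = z·ψ(z^n). Then φ commutes with Q(z) = α/conj(z) (where α ∈ ℂ, α ≠ 0) if and only if ψ(z)·conj(ψ)(α^n/z) = 1 for all z, where conj(ψ) denotes the rational map obtained by conjugating all coefficients of ψ. Moreover Q² is the rotation z ↦ (α/conj(α))·z, so Q² ∈ ⟨T(z) = e^{2πi/n}z⟩ forces α/conj(α) to be an n-th root of unity. -/

import Mathlib

open OnePoint Complex Polynomial

/-- The Möbius transformation determined by the matrix `[[a,b],[c,d]]`,
acting on the Riemann sphere `OnePoint ℂ`. -/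
noncomputable def moeb (a b c d : ℂ) (p : OnePoint ℂ) : OnePoint ℂ :=
  OnePoint.elim p (if c = 0 then ∞ else ((a / c : ℂ) : OnePoint ℂ))
    (fun z => if c * z + d = 0 then ∞ else (((a * z + b) / (c * z + d) : ℂ) : OnePoint ℂ))

/-- Complex conjugation extended to the Riemann sphere. -/
noncomputable def sphConj (p : OnePoint ℂ) : OnePoint ℂ :=
  OnePoint.elim p ∞ (fun z => ((starRingEnd ℂ) z : OnePoint ℂ))

/-- The imaginary reflection `τ(z) = -1/conj z` on the Riemann sphere. -/
noncomputable def tauSph (p : OnePoint ℂ) : OnePoint ℂ :=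
  moeb 0 (-1) 1 0 (sphConj p)

/-- The rational map on the Riemann sphere determined by a quotient `P/Q`
of (coprime) polynomials. -/
noncomputable def ratMap (P Q : Polynomial ℂ) (p : OnePoint ℂ) : OnePoint ℂ :=
  OnePoint.elim p
    (if Q.degree < P.degree then ∞
     else ((P.coeff Q.natDegree / Q.leadingCoeff : ℂ) : OnePoint ℂ))
    (fun z => if Q.eval z = 0 then ∞ else ((P.eval z / Q.eval z : ℂ) : OnePoint ℂ))

/-
In homogeneous coordinates `Q [x : y] = [α ȳ : x̄]`, hence `Q² [x : y] = [α x : ᾱ y]`. At a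
point `x ≠ 0` the equation `Q (φ x) = φ (Q x)` cross-multiplies to
`A(w) Ā(αⁿ/w) = B(w) B̄(αⁿ/w)` with `w = (α / x̄)ⁿ`, and `w` runs over `ℂˣ` with `x`.
Conversely, the hypothesis gives this identity off a finite set. Multiplied by a power of `w`
it becomes an identity of polynomials, so it holds on all of `ℂˣ`, and comparing the orders at
`0` of both sides gives `deg B - deg A = ord₀ B - ord₀ A`. For `n ≥ 2` this makes `φ` swap `0`
and `∞` when `B(0) = 0` and fix them otherwise, which is commutation with `Q` at `0` and `∞`.
-/
open ComplexConjugate Filter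

section ProjectiveCoordinates

variable {K : Type*} [Field K] [DecidableEq K]

/-- The point `[a : b]` of the projective line; the degenerate `ratio 0 0` is `∞`. -/
noncomputable def ratio (a b : K) : OnePoint K := if b = 0 then ∞ else ((a / b : K) : OnePoint K)

@[simp] lemma ratio_zero_right (a : K) : ratio a 0 = ∞ := if_pos rfl

lemma ratio_of_ne_zero (a : K) {b : K} (hb : b ≠ 0) : ratio a b = ((a / b : K) : OnePoint K) :=
  if_neg hb

@[simp] lemma ratio_one_right (a : K) : ratio a 1 = (a : OnePoint K) := by
  simp [ratio_of_ne_zero]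

lemma ratio_eq_ratio_iff {a b c d : K} (hab : a ≠ 0 ∨ b ≠ 0) (hcd : c ≠ 0 ∨ d ≠ 0) :
    ratio a b = ratio c d ↔ a * d = b * c := by
  unfold ratio
  split_ifs with hb hd hd <;> simp_all [div_eq_div_iff, mul_comm]

lemma exists_ratio_eq (p : OnePoint K) : ∃ x y : K, (x ≠ 0 ∨ y ≠ 0) ∧ ratio x y = p := by
  induction p using OnePoint.rec with
  | infty => exact ⟨1, 0, .inl one_ne_zero, ratio_zero_right 1⟩
  | coe z => exact ⟨z, 1, .inr one_ne_zero, ratio_one_right z⟩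

end ProjectiveCoordinates

lemma moeb_ratio (a b c d : ℂ) {x y : ℂ} (hxy : x ≠ 0 ∨ y ≠ 0) :
    moeb a b c d (ratio x y) = ratio (a * x + b * y) (c * x + d * y) := by
  by_cases hy : y = 0
  · subst hy
    have hx : x ≠ 0 := by simpa using hxy
    by_cases hc : c = 0 <;> simp [moeb, hc, hx, ratio_of_ne_zero, mul_div_mul_right]
  · have hcd : c * x + d * y = y * (c * (x / y) + d) := by field_simp
    rw [ratio_of_ne_zero x hy, hcd]
    by_cases h : c * (x / y) + d = 0
    · simp [moeb, h]
    · rw [ratio_of_ne_zero _ (mul_ne_zero hy h)]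
      simp only [moeb, OnePoint.elim_some, if_neg h, OnePoint.coe_eq_coe]
      field_simp

lemma sphConj_ratio (a b : ℂ) : sphConj (ratio a b) = ratio (conj a) (conj b) := by
  by_cases hb : b = 0 <;> simp [ratio, sphConj, hb]

lemma moeb_sphConj_ratio (α : ℂ) {x y : ℂ} (hxy : x ≠ 0 ∨ y ≠ 0) :
    moeb 0 α 1 0 (sphConj (ratio x y)) = ratio (α * conj y) (conj x) := by
  rw [sphConj_ratio, moeb_ratio _ _ _ _ (by simpa using hxy)]
  ring_nf

lemma moeb_sphConj_coe_eq_ratio (α x : ℂ) :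
    moeb 0 α 1 0 (sphConj x) = ratio α (conj x) := by
  rw [← ratio_one_right x, moeb_sphConj_ratio α (.inr one_ne_zero)]
  simp

lemma exists_div_conj_pow_eq {α : ℂ} (hα : α ≠ 0) {n : ℕ} (hn : n ≠ 0) {w : ℂ} (hw : w ≠ 0) :
    ∃ x ≠ 0, (α / conj x) ^ n = w := by
  obtain ⟨c, rfl⟩ := IsAlgClosed.exists_pow_nat_eq w (Nat.pos_of_ne_zero hn)
  have hc : c ≠ 0 := by rintro rfl; exact hw (zero_pow hn)
  exact ⟨conj (α / c), by simp [hα, hc], by simp [div_div_cancel₀ hα]⟩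

lemma moeb_sphConj_moeb_sphConj {α : ℂ} (hα : α ≠ 0) (p : OnePoint ℂ) :
    moeb 0 α 1 0 (sphConj (moeb 0 α 1 0 (sphConj p))) = moeb (α / conj α) 0 0 1 p := by
  obtain ⟨x, y, hxy, rfl⟩ := exists_ratio_eq p
  have hxy' : α * conj y ≠ 0 ∨ conj x ≠ 0 := by rcases hxy with h | h <;> simp [h, hα]
  have hcα : conj α ≠ 0 := by simpa using hα
  rw [moeb_sphConj_ratio α hxy, moeb_sphConj_ratio α hxy', moeb_ratio _ _ _ _ hxy,
    ratio_eq_ratio_iff]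
  · simp only [map_mul, conj_conj]
    field_simp
    ring
  · rcases hxy with h | h <;> simp [h, hα]
  · rcases hxy with h | h <;> simp [h, hα]

section Reversal

variable {K : Type*} [Field K]

lemma eval_reverse_comp_C_mul_X {s w : K} (hs : s ≠ 0) (hw : w ≠ 0) (P : K[X]) :
    (P.comp (C s * X)).reverse.eval w = w ^ P.natDegree * P.eval (s / w) := by
  let := invertibleOfNonzero (inv_ne_zero hw)
  have h := eval₂_reverse_mul_pow (RingHom.id K) w⁻¹ (P.comp (C s * X))
  rw [invOf_eq_inv, inv_inv, natDegree_comp, natDegree_C_mul_X s hs, mul_one, eval₂_id,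
    eval₂_id, eval_comp, eval_mul, eval_C, eval_X, ← div_eq_mul_inv] at h
  rw [← h, mul_left_comm, ← mul_pow, mul_inv_cancel₀ hw, one_pow, mul_one]

variable [Infinite K] {s : K} {A A' B B' : K[X]}

lemma mul_reverse_eq_of_eventually (hs : s ≠ 0)
    (h : ∀ᶠ w in cofinite, A.eval w * A'.eval (s / w) = B.eval w * B'.eval (s / w)) :
    A * (A'.comp (C s * X)).reverse * X ^ B'.natDegree
      = B * (B'.comp (C s * X)).reverse * X ^ A'.natDegree := by
  refine eq_of_infinite_eval_eq _ _ (frequently_cofinite_iff_infinite.mp ?_)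
  refine ((h.and (eventually_cofinite_ne 0)).frequently).mono fun w ⟨hw, hw0⟩ => ?_
  simp only [eval_mul, eval_pow, eval_X, eval_reverse_comp_C_mul_X hs hw0]
  linear_combination w ^ A'.natDegree * w ^ B'.natDegree * hw

lemma eval_mul_eval_div_eq_of_eventually (hs : s ≠ 0)
    (h : ∀ᶠ w in cofinite, A.eval w * A'.eval (s / w) = B.eval w * B'.eval (s / w))
    {w : K} (hw : w ≠ 0) : A.eval w * A'.eval (s / w) = B.eval w * B'.eval (s / w) := by
  have hw' := congrArg (eval w) (mul_reverse_eq_of_eventually hs h)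
  simp only [eval_mul, eval_pow, eval_X, eval_reverse_comp_C_mul_X hs hw] at hw'
  refine mul_left_cancel₀ (pow_ne_zero (A'.natDegree + B'.natDegree) hw) ?_
  linear_combination hw'

lemma natDegree_add_natTrailingDegree_eq_of_eventually (hs : s ≠ 0) (hA : A ≠ 0) (hA' : A' ≠ 0)
    (hB : B ≠ 0) (hB' : B' ≠ 0)
    (h : ∀ᶠ w in cofinite, A.eval w * A'.eval (s / w) = B.eval w * B'.eval (s / w)) :
    A.natTrailingDegree + B'.natDegree = B.natTrailingDegree + A'.natDegree := by
  have hrev {P : K[X]} (hP : P ≠ 0) : (P.comp (C s * X)).reverse ≠ 0 := by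
    rwa [Ne, reverse_eq_zero, comp_C_mul_X_eq_zero_iff (mem_nonZeroDivisors_of_ne_zero hs)]
  have h' := congrArg natTrailingDegree (mul_reverse_eq_of_eventually hs h)
  rwa [natTrailingDegree_mul_X_pow (mul_ne_zero hA (hrev hA')),
    natTrailingDegree_mul_X_pow (mul_ne_zero hB (hrev hB')), natTrailingDegree_mul hA (hrev hA'),
    natTrailingDegree_mul hB (hrev hB'), natTrailingDegree_reverse, natTrailingDegree_reverse,
    add_zero, add_zero] at h'

end Reversal

lemma eventually_cofinite_eval_ne_zero {R : Type*} [CommRing R] [IsDomain R] {P : R[X]} (hP : P ≠ 0) :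
    ∀ᶠ z in cofinite, P.eval z ≠ 0 :=
  (finite_setOfPred_isRoot hP).eventually_cofinite_notMem

lemma ratMap_coe (P Q : ℂ[X]) (z : ℂ) : ratMap P Q z = ratio (P.eval z) (Q.eval z) := rfl

lemma ratMap_infty_of_natDegree_lt {P Q : ℂ[X]} (h : Q.natDegree < P.natDegree) :
    ratMap P Q ∞ = ∞ :=
  if_pos (degree_lt_degree h)

lemma ratMap_infty_of_natDegree_gt {P Q : ℂ[X]} (h : P.natDegree < Q.natDegree) :
    ratMap P Q ∞ = ((0 : ℂ) : OnePoint ℂ) := by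
  simp only [ratMap, OnePoint.elim_infty, if_neg (degree_lt_degree h).not_gt,
    coeff_eq_zero_of_natDegree_lt h, zero_div]

section EquivariantMap

variable {n : ℕ} {α : ℂ} {A B : ℂ[X]}

lemma ratMap_X_mul_comp_X_pow_coe (z : ℂ) :
    ratMap (X * A.comp (X ^ n)) (B.comp (X ^ n)) z
      = ratio (z * A.eval (z ^ n)) (B.eval (z ^ n)) := by
  simp [ratMap_coe, eval_comp]

lemma ratMap_X_mul_comp_X_pow_zero (hn : n ≠ 0) :
    ratMap (X * A.comp (X ^ n)) (B.comp (X ^ n)) ((0 : ℂ) : OnePoint ℂ)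
      = if B.eval 0 = 0 then ∞ else ((0 : ℂ) : OnePoint ℂ) := by
  rw [ratMap_X_mul_comp_X_pow_coe, zero_pow hn, zero_mul, ratio]
  split_ifs <;> simp

lemma ratMap_X_mul_comp_X_pow_infty (hn : 2 ≤ n) (hAB : IsCoprime A B)
    (hA : A ≠ 0) (hB : B ≠ 0)
    (hdeg : A.natTrailingDegree + B.natDegree = B.natTrailingDegree + A.natDegree) :
    ratMap (X * A.comp (X ^ n)) (B.comp (X ^ n)) ∞
      = if B.eval 0 = 0 then ((0 : ℂ) : OnePoint ℂ) else ∞ := by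
  have hAn : A.comp (X ^ n) ≠ 0 := by
    rw [← expand_eq_comp_X_pow]; exact (expand_ne_zero (by omega)).mpr hA
  have hP : (X * A.comp (X ^ n)).natDegree = A.natDegree * n + 1 := by
    rw [natDegree_X_mul hAn, natDegree_comp, natDegree_X_pow]
  have hQ : (B.comp (X ^ n)).natDegree = B.natDegree * n := by
    rw [natDegree_comp, natDegree_X_pow]
  split_ifs with hB0
  · have hA0 : A.eval 0 ≠ 0 := by
      simpa [hB0] using aeval_ne_zero_of_isCoprime hAB (0 : ℂ)
    have hAtd : A.natTrailingDegree = 0 := by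
      rwa [natTrailingDegree_eq_zero, coeff_zero_eq_eval_zero, or_iff_right hA]
    have hBtd : B.natTrailingDegree ≠ 0 := by
      rwa [Ne, natTrailingDegree_eq_zero, coeff_zero_eq_eval_zero, or_iff_right hB, not_not]
    have hdeg' : A.natDegree + 1 ≤ B.natDegree := by omega
    refine ratMap_infty_of_natDegree_gt ?_
    rw [hP, hQ]
    nlinarith [Nat.mul_le_mul_right n hdeg']
  · have hBtd : B.natTrailingDegree = 0 := by
      rwa [natTrailingDegree_eq_zero, coeff_zero_eq_eval_zero, or_iff_right hB]
    refine ratMap_infty_of_natDegree_lt ?_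
    rw [hP, hQ]
    nlinarith

lemma moeb_sphConj_comm_coe_iff (hα : α ≠ 0) (hAB : IsCoprime A B) {x w : ℂ}
    (hx : x ≠ 0) (hxw : (α / conj x) ^ n = w) :
    moeb 0 α 1 0 (sphConj (ratMap (X * A.comp (X ^ n)) (B.comp (X ^ n)) x))
        = ratMap (X * A.comp (X ^ n)) (B.comp (X ^ n)) (moeb 0 α 1 0 (sphConj x)) ↔
      A.eval w * (A.map conj).eval (α ^ n / w) = B.eval w * (B.map conj).eval (α ^ n / w) := by
  have hcx : conj x ≠ 0 := by simpa using hx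
  have hw : α ^ n / w = conj (x ^ n) := by
    rw [← hxw, div_pow, div_div_cancel₀ (by simp [hα]), map_pow]
  have hcop (t : ℂ) : A.eval t ≠ 0 ∨ B.eval t ≠ 0 := by
    simpa using aeval_ne_zero_of_isCoprime hAB t
  rw [hw, eval_map_apply, eval_map_apply, moeb_sphConj_coe_eq_ratio, ratio_of_ne_zero _ hcx,
    ratMap_X_mul_comp_X_pow_coe, ratMap_X_mul_comp_X_pow_coe, hxw, moeb_sphConj_ratio,
    ratio_eq_ratio_iff]
  · have hαx : conj (x * A.eval (x ^ n)) * (α / conj x * A.eval w)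
        = α * (A.eval w * conj (A.eval (x ^ n))) := by
      rw [map_mul]; field_simp
    rw [hαx, mul_assoc, mul_right_inj' hα, mul_comm, eq_comm]
  · rcases hcop (x ^ n) with h | h <;> simp [h, hα, hx]
  · rcases hcop w with h | h <;> simp [h, hα, hx]
  · rcases hcop (x ^ n) with h | h <;> simp [h, hx]

lemma moeb_sphConj_comm_coe_iff_forall (hα : α ≠ 0) (hn : n ≠ 0) (hAB : IsCoprime A B) :
    (∀ x : ℂ, x ≠ 0 → moeb 0 α 1 0 (sphConj (ratMap (X * A.comp (X ^ n)) (B.comp (X ^ n)) x))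
        = ratMap (X * A.comp (X ^ n)) (B.comp (X ^ n)) (moeb 0 α 1 0 (sphConj x))) ↔
      ∀ w : ℂ, w ≠ 0 →
        A.eval w * (A.map conj).eval (α ^ n / w) = B.eval w * (B.map conj).eval (α ^ n / w) := by
  refine ⟨fun h w hw => ?_, fun h x hx => ?_⟩
  · obtain ⟨x, hx, hxw⟩ := exists_div_conj_pow_eq hα hn hw
    exact (moeb_sphConj_comm_coe_iff hα hAB hx hxw).mp (h x hx)
  · refine (moeb_sphConj_comm_coe_iff hα hAB hx rfl).mpr (h _ ?_)
    simp [hα, hx]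

lemma moeb_sphConj_comm_of_forall_eval_mul_eval (hα : α ≠ 0) (hn : 2 ≤ n) (hAB : IsCoprime A B)
    (hB : B ≠ 0)
    (H : ∀ z : ℂ, z ≠ 0 → B.eval z ≠ 0 → (B.map conj).eval (α ^ n / z) ≠ 0 →
      (A.eval z / B.eval z) * ((A.map conj).eval (α ^ n / z) / (B.map conj).eval (α ^ n / z)) = 1)
    (p : OnePoint ℂ) :
    moeb 0 α 1 0 (sphConj (ratMap (X * A.comp (X ^ n)) (B.comp (X ^ n)) p))
      = ratMap (X * A.comp (X ^ n)) (B.comp (X ^ n)) (moeb 0 α 1 0 (sphConj p)) := by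
  have hs : α ^ n ≠ 0 := pow_ne_zero n hα
  have hgood : ∀ᶠ z in cofinite,
      z ≠ 0 ∧ B.eval z ≠ 0 ∧ (B.map conj).eval (α ^ n / z) ≠ 0 :=
    (eventually_cofinite_ne 0).and <| (eventually_cofinite_eval_ne_zero hB).and <|
      (Function.Involutive.injective fun z => div_div_cancel₀ hs).tendsto_cofinite.eventually
        (eventually_cofinite_eval_ne_zero (map_ne_zero hB))
  have hev : ∀ᶠ z in cofinite,
      A.eval z * (A.map conj).eval (α ^ n / z) = B.eval z * (B.map conj).eval (α ^ n / z) :=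
    hgood.mono fun z ⟨hz, hBz, hB'z⟩ => by
      simpa [div_mul_div_comm, div_eq_one_iff_eq (mul_ne_zero hBz hB'z)] using H z hz hBz hB'z
  have hA : A ≠ 0 := by
    rintro rfl
    obtain ⟨z, hz, hBz, hB'z⟩ := hgood.exists
    simpa using H z hz hBz hB'z
  have hdeg := natDegree_add_natTrailingDegree_eq_of_eventually hs hA (map_ne_zero hA) hB
    (map_ne_zero hB) hev
  rw [natDegree_map, natDegree_map] at hdeg
  have hcoe := (moeb_sphConj_comm_coe_iff_forall hα (by omega) hAB).mpr
    fun w hw => eval_mul_eval_div_eq_of_eventually hs hev hw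
  have hφ0 := ratMap_X_mul_comp_X_pow_zero (A := A) (B := B) (by omega : n ≠ 0)
  have hφinf := ratMap_X_mul_comp_X_pow_infty hn hAB hA hB hdeg
  induction p using OnePoint.rec with
  | infty =>
    have hqinf : moeb 0 α 1 0 (sphConj ∞) = ((0 : ℂ) : OnePoint ℂ) := by simp [moeb, sphConj]
    rw [hqinf, hφ0, hφinf]
    split_ifs <;> simp [moeb, sphConj]
  | coe x =>
    rcases eq_or_ne x 0 with rfl | hx
    · rw [moeb_sphConj_coe_eq_ratio, map_zero, ratio_zero_right, hφ0, hφinf]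
      split_ifs <;> simp [moeb, sphConj]
    · exact hcoe x hx

end EquivariantMap

/-- `φ(z) = z ψ(z^n)` commutes with `Q(z) = α/conj z` iff
`ψ(z)·conj(ψ)(α^n/z) = 1`; moreover `Q²` is the rotation `z ↦ (α/conj α) z`,
and `Q² ∈ ⟨T⟩` forces `α/conj α` to be an `n`-th root of unity. -/
theorem commutes_with_alpha_inversion_iff
    (n : ℕ) (hn : 2 ≤ n) (α : ℂ) (hα : α ≠ 0)
    (A B : Polynomial ℂ) (hAB : IsCoprime A B) (hB : B ≠ 0) :
    ((∀ p, moeb 0 α 1 0 (sphConj (ratMap (X * A.comp (X ^ n)) (B.comp (X ^ n)) p))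
        = ratMap (X * A.comp (X ^ n)) (B.comp (X ^ n)) (moeb 0 α 1 0 (sphConj p))) ↔
      (∀ z : ℂ, z ≠ 0 → B.eval z ≠ 0 →
        (B.map (starRingEnd ℂ)).eval (α ^ n / z) ≠ 0 →
        (A.eval z / B.eval z) *
          ((A.map (starRingEnd ℂ)).eval (α ^ n / z) /
            (B.map (starRingEnd ℂ)).eval (α ^ n / z)) = 1))
    ∧ (∀ p, moeb 0 α 1 0 (sphConj (moeb 0 α 1 0 (sphConj p)))
        = moeb (α / (starRingEnd ℂ) α) 0 0 1 p)
    ∧ ((∃ k : ℕ, α / (starRingEnd ℂ) α = Complex.exp (2 * Real.pi * Complex.I / n) ^ k) →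
        (α / (starRingEnd ℂ) α) ^ n = 1) := by
  refine ⟨⟨fun hcomm z hz hBz hB'z => ?_, moeb_sphConj_comm_of_forall_eval_mul_eval hα hn hAB hB⟩,
    moeb_sphConj_moeb_sphConj hα, ?_⟩
  · have hw := (moeb_sphConj_comm_coe_iff_forall hα (by omega) hAB).mp (fun x _ => hcomm x) z hz
    rwa [div_mul_div_comm, div_eq_one_iff_eq (mul_ne_zero hBz hB'z)]
  · rintro ⟨k, hk⟩
    rw [hk, pow_right_comm, (isPrimitiveRoot_exp n (by omega)).pow_eq_one, one_pow]
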